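/- arXiv:2511.00015 — 2 statements merged into one kernel-verified Lean document; each statement's English description precedes it below -/
import Mathlib

section
/- For every permutation π of {1,…,n}, the strip swap distance satisfies SSD(π) ≥ ⌈(#strips(π) − 1)/4⌉. -/
/-- A run: each element is the successor of the previous one. -/
def IsRun (l : List ℕ) : Prop := l.Chain' (fun a b => b = a + 1)

/-- `noLink x y`: the optional value `y` does not continue the optional value `x` by +1. -/
def noLink (x y : Option ℕ) : Prop := ∀ a ∈ x, ∀ b ∈ y, b ≠ a + 1

/-- Number of "breaks" between consecutive entries (places where the successor chain stops). -/
def breaks (l : List ℕ) : ℕ := (l.zip l.tail).countP (fun p => decide (p.2 ≠ p.1 + 1))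

/-- Number of strips (maximal runs of consecutive increasing values). -/
def numStrips (l : List ℕ) : ℕ := if l = [] then 0 else 1 + breaks l

/-- Number of reversals (descents): adjacent pairs with the left entry larger. -/
def revCount (l : List ℕ) : ℕ := (l.zip l.tail).countP (fun p => decide (p.2 < p.1))

/-- `π'` is obtained from `π` by swapping two (disjoint) strips of `π`. -/
def StripSwap (π π' : List ℕ) : Prop :=
  ∃ A X B Y C : List ℕ,
    π = A ++ X ++ B ++ Y ++ C ∧
    π' = A ++ Y ++ B ++ X ++ C ∧
    X ≠ [] ∧ Y ≠ [] ∧ IsRun X ∧ IsRun Y ∧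
    noLink A.getLast? X.head? ∧ noLink X.getLast? (B ++ Y ++ C).head? ∧
    noLink (A ++ X ++ B).getLast? Y.head? ∧ noLink Y.getLast? C.head?

/-- `π'` is obtained from `π` by removing one strip and reinserting it at another position. -/
def BlockMove (π π' : List ℕ) : Prop :=
  ∃ A X B A' B' : List ℕ,
    π = A ++ X ++ B ∧
    X ≠ [] ∧ IsRun X ∧
    noLink A.getLast? X.head? ∧ noLink X.getLast? B.head? ∧
    A' ++ B' = A ++ B ∧ A' ≠ A ∧
    π' = A' ++ X ++ B'

/-- `StepsTo R k a b`: `b` is reachable from `a` in exactly `k` steps of the relation `R`. -/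
def StepsTo (R : List ℕ → List ℕ → Prop) : ℕ → List ℕ → List ℕ → Prop
  | 0 => fun a b => a = b
  | k + 1 => fun a b => ∃ c, R a c ∧ StepsTo R k c b

/-- The identity permutation of `{1,…,n}` in one-line notation. -/
def idPerm (n : ℕ) : List ℕ := List.range' 1 n

/-- Strip swap distance to the identity permutation of `{1,…,n}`. -/
noncomputable def SSD (n : ℕ) (π : List ℕ) : ℕ :=
  sInf {m | StepsTo StripSwap m π (idPerm n)}

/-- Block sorting distance to the identity permutation of `{1,…,n}`. -/
noncomputable def BS (n : ℕ) (π : List ℕ) : ℕ :=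
  sInf {m | StepsTo BlockMove m π (idPerm n)}

/-! A strip swap only touches the four junctions at the ends of the two strips, so it removes at
most four breaks, i.e. at most four strips; the identity has a single strip. The bound is not
vacuous because every permutation can be sorted by strip swaps (otherwise `SSD` would be
`sInf ∅ = 0`): with the values `1, …, k` already in place, either the next strip continues the
sorted prefix, or swapping it with the strip beginning with `k + 1` lengthens the prefix. -/

def junction : Option ℕ → Option ℕ → ℕ
  | some a, some b => if b = a + 1 then 0 else 1
  | _, _ => 0

lemma junction_le_one (x y : Option ℕ) : junction x y ≤ 1 := by
  unfold junction
  split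
  · split <;> omega
  · omega

lemma breaks_cons (a : ℕ) (t : List ℕ) :
    breaks (a :: t) = junction (some a) t.head? + breaks t := by
  cases t with
  | nil => rfl
  | cons b s =>
    show List.countP _ ((a, b) :: (b :: s).zip s) = _
    rw [List.countP_cons]
    by_cases hb : b = a + 1 <;> simp [junction, hb, breaks]; omega

lemma breaks_append (l l' : List ℕ) :
    breaks (l ++ l') = breaks l + junction l.getLast? l'.head? + breaks l' := by
  induction l with
  | nil => simp [breaks, junction]
  | cons a l ih =>
    rw [List.cons_append, breaks_cons, breaks_cons, ih]
    cases l with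
    | nil => simp [breaks, junction]
    | cons b s =>
      simp only [List.cons_append, List.head?_cons, List.getLast?_cons_cons]
      omega

lemma breaks_append_le (l l' : List ℕ) : breaks (l ++ l') ≤ breaks l + breaks l' + 1 := by
  have := junction_le_one l.getLast? l'.head?
  rw [breaks_append]
  omega

lemma breaks_add_breaks_le (l l' : List ℕ) : breaks l + breaks l' ≤ breaks (l ++ l') := by
  rw [breaks_append]
  omega

lemma breaks_swap_le (A X B Y C : List ℕ) :
    breaks (A ++ X ++ B ++ Y ++ C) ≤ breaks (A ++ Y ++ B ++ X ++ C) + 4 := by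
  calc breaks (A ++ X ++ B ++ Y ++ C)
      ≤ breaks A + breaks X + breaks B + breaks Y + breaks C + 4 := by
        have := breaks_append_le (A ++ X ++ B ++ Y) C
        have := breaks_append_le (A ++ X ++ B) Y
        have := breaks_append_le (A ++ X) B
        have := breaks_append_le A X
        omega
    _ ≤ breaks (A ++ Y ++ B ++ X ++ C) + 4 := by
        have := breaks_add_breaks_le (A ++ Y ++ B ++ X) C
        have := breaks_add_breaks_le (A ++ Y ++ B) X
        have := breaks_add_breaks_le (A ++ Y) B
        have := breaks_add_breaks_le A Y
        omega

lemma StripSwap.numStrips_le {π π' : List ℕ} (h : StripSwap π π') :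
    numStrips π ≤ numStrips π' + 4 := by
  obtain ⟨A, X, B, Y, C, rfl, rfl, hX, hY, -⟩ := h
  have := breaks_swap_le A X B Y C
  simp only [numStrips, List.append_eq_nil_iff, hX, hY, and_false, false_and, if_false]
  omega

lemma StepsTo.le_add_mul {R : List ℕ → List ℕ → Prop} {f : List ℕ → ℕ} {c : ℕ}
    (hR : ∀ a b, R a b → f a ≤ f b + c) :
    ∀ {m : ℕ} {a b : List ℕ}, StepsTo R m a b → f a ≤ f b + c * m
  | 0, _, _, rfl => le_rfl
  | m + 1, a, b, ⟨d, had, hdb⟩ => by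
    have := hR a d had
    have := StepsTo.le_add_mul hR hdb
    rw [Nat.mul_succ]
    omega

lemma isRun_range' (s n : ℕ) : IsRun (List.range' s n) := List.isChain_range' s n 1

lemma breaks_eq_zero_of_isRun {l : List ℕ} (h : IsRun l) : breaks l = 0 := by
  induction l with
  | nil => rfl
  | cons a t ih =>
    rw [IsRun, List.Chain', List.isChain_cons] at h
    rw [breaks_cons, ih h.2]
    cases ht : t.head? with
    | none => rfl
    | some b => simp [junction, h.1 b ht]

lemma numStrips_idPerm_le (n : ℕ) : numStrips (idPerm n) ≤ 1 := by
  have : breaks (idPerm n) = 0 := breaks_eq_zero_of_isRun (isRun_range' 1 n)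
  unfold numStrips
  split <;> omega

lemma exists_range'_append_noLink (a : ℕ) (t : List ℕ) :
    ∃ m s, a :: t = List.range' a (m + 1) ++ s ∧ noLink (some (a + m)) s.head? := by
  induction t generalizing a with
  | nil => exact ⟨0, [], rfl, by simp [noLink]⟩
  | cons b t ih =>
    by_cases hb : b = a + 1
    · obtain ⟨m, s, hbt, hs⟩ := ih b
      refine ⟨m + 1, s, ?_, ?_⟩
      · rw [hbt, List.range'_succ (n := m + 1), hb]
        rfl
      · simpa [hb, Nat.add_assoc, Nat.add_comm 1 m] using hs
    · exact ⟨0, b :: t, rfl, by simpa [noLink] using hb⟩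

lemma StripSwap.perm {π π' : List ℕ} (h : StripSwap π π') : π'.Perm π := by
  obtain ⟨A, X, B, Y, C, rfl, rfl, -⟩ := h
  rw [List.perm_iff_count]
  intro c
  simp only [List.count_append]
  omega

lemma idPerm_append_range' (k m : ℕ) : idPerm k ++ List.range' (k + 1) m = idPerm (k + m) := by
  rw [idPerm, idPerm, ← List.range'_append, Nat.one_mul, Nat.add_comm 1 k]

lemma stripSwap_idPerm_append {k a m j : ℕ} {B V : List ℕ} (ha : a ≠ k + 1)
    (hk : k ∉ List.range' a (m + 1) ++ B)
    (hX : noLink (some (a + m)) (B ++ List.range' (k + 1) (j + 1) ++ V).head?)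
    (hV : noLink (some (k + 1 + j)) V.head?) :
    StripSwap (idPerm k ++ List.range' a (m + 1) ++ B ++ List.range' (k + 1) (j + 1) ++ V)
      (idPerm (k + (j + 1)) ++ (B ++ List.range' a (m + 1) ++ V)) := by
  refine ⟨idPerm k, List.range' a (m + 1), B, List.range' (k + 1) (j + 1), V, rfl, ?_,
    by simp, by simp, isRun_range' _ _, isRun_range' _ _, ?_, ?_, ?_, ?_⟩
  · simp only [← idPerm_append_range', List.append_assoc]
  · intro x hx y hy
    simp only [idPerm, List.getLast?_range', List.head?_range'] at hx hy
    split at hx <;> simp at hx hy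
    omega
  · simpa [List.getLast?_range'] using hX
  · intro x hx y hy
    have hyk : y = k + 1 := by simpa [List.head?_range'] using hy.symm
    have hlast : (List.range' a (m + 1) ++ B).getLast? = some x := by
      rw [List.append_assoc, List.getLast?_append, Option.mem_def] at hx
      simpa [List.getLast?_append] using hx
    intro hyx
    obtain rfl : x = k := by omega
    exact hk (List.mem_of_getLast? hlast)
  · simpa [List.getLast?_range'] using hV

lemma notMem_of_idPerm_append_perm {k n : ℕ} {T : List ℕ}
    (hp : (idPerm k ++ T).Perm (idPerm n)) : k ∉ T := by
  intro hk
  rcases Nat.eq_zero_or_pos k with rfl | hk0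
  · simpa [idPerm] using hp.subset (List.mem_append_right _ hk)
  · have hnd := (List.nodup_append.1 (hp.nodup_iff.2 List.nodup_range'))
    exact hnd.2.2 k (List.mem_range'_1.2 ⟨hk0, by omega⟩) k hk rfl

lemma succ_mem_of_idPerm_append_perm {k n : ℕ} {T : List ℕ}
    (hp : (idPerm k ++ T).Perm (idPerm n)) (hT : T ≠ []) : k + 1 ∈ T := by
  have hlen : k + T.length = n := by simpa [idPerm] using hp.length_eq
  have hpos := List.length_pos_iff.2 hT
  have := hp.symm.subset (List.mem_range'_1.2 ⟨by omega, by omega⟩ : k + 1 ∈ idPerm n)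
  refine (List.mem_append.1 this).resolve_left ?_
  simp only [idPerm, List.mem_range'_1]
  omega

lemma exists_stepsTo_idPerm_of_perm {k n : ℕ} {T : List ℕ}
    (hp : (idPerm k ++ T).Perm (idPerm n)) :
    ∃ m, StepsTo StripSwap m (idPerm k ++ T) (idPerm n) := by
  induction hL : T.length using Nat.strong_induction_on generalizing k T with
  | _ L ih =>
    rcases T with _ | ⟨a, t⟩
    · have hk : k = n := by simpa [idPerm] using hp.length_eq
      exact ⟨0, by simp [StepsTo, hk]⟩
    obtain ⟨m, s, hts, hs⟩ := exists_range'_append_noLink a t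
    have hlen := congrArg List.length hts
    simp only [List.length_cons, List.length_append, List.length_range'] at hL hlen
    by_cases ha : a = k + 1
    · subst ha
      have heq : idPerm k ++ (k + 1) :: t = idPerm (k + (m + 1)) ++ s := by
        rw [hts, ← List.append_assoc, idPerm_append_range']
      rw [heq] at hp ⊢
      exact ih s.length (by omega) hp rfl
    have hk : k ∉ List.range' a (m + 1) ++ s := hts ▸ notMem_of_idPerm_append_perm hp
    have hk1 : k + 1 ∈ s := by
      have := hts ▸ succ_mem_of_idPerm_append_perm hp (List.cons_ne_nil a t)
      refine (List.mem_append.1 this).resolve_left fun hX => hk (List.mem_append_left _ ?_)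
      simp only [List.mem_range'_1] at hX ⊢
      omega
    obtain ⟨B, r, rfl⟩ := List.append_of_mem hk1
    obtain ⟨j, V, hr, hV⟩ := exists_range'_append_noLink (k + 1) r
    have heq : idPerm k ++ a :: t =
        idPerm k ++ List.range' a (m + 1) ++ B ++ List.range' (k + 1) (j + 1) ++ V := by
      simp only [hts, hr, List.append_assoc]
    have hswap := stripSwap_idPerm_append (B := B) ha
      (by simp only [List.mem_append] at hk ⊢; tauto)
      (by simpa only [hr, List.append_assoc] using hs) hV
    have hlen' := congrArg List.length hr
    simp only [List.length_cons, List.length_append, List.length_range'] at hlen hlen'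
    obtain ⟨m', hm'⟩ := ih _ (by simp only [List.length_append, List.length_range']; omega)
      (hswap.perm.trans (heq ▸ hp)) rfl
    exact ⟨m' + 1, _, heq ▸ hswap, hm'⟩

/-- `SSD(π) ≥ ⌈(#strips(π) − 1)/4⌉`. -/
theorem SSD_ge_strips_bound (n : ℕ) (π : List ℕ) (hperm : π.Perm (idPerm n)) :
    SSD n π ≥ (numStrips π - 1 + 3) / 4 := by
  obtain ⟨m, hm⟩ := exists_stepsTo_idPerm_of_perm (k := 0) hperm
  have hsorted : StepsTo StripSwap (SSD n π) π (idPerm n) :=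
    Nat.sInf_mem (s := {m | StepsTo StripSwap m π (idPerm n)}) ⟨m, hm⟩
  have hdrop := StepsTo.le_add_mul (fun _ _ h => h.numStrips_le) hsorted
  have hid := numStrips_idPerm_le n
  omega
end

section
/- For every permutation π of {1,…,n}, the strip swap distance satisfies SSD(π) ≥ ⌈rev(π)/2⌉. -/
/-!
Only the descents at the junctions around the two swapped strips can change, and an exchange
argument shows that at most two of them disappear (when the strips are adjacent this uses that a
strip is increasing). Hence `k` strip swaps remove at most `2k` descents, and the identity has
none. Since `SSD` is an infimum, this needs a sorting sequence to exist at all: swapping the strip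
at the front of the unsorted part with the strip that starts at the next missing value lengthens
the sorted prefix.
-/

/-- The descent at the junction of two lists, read off the last entry of the left one and the
first entry of the right one (`none` for an empty side). -/
def descentAcross : Option ℕ → Option ℕ → ℕ
  | some a, some b => if b < a then 1 else 0
  | _, _ => 0

@[simp]
theorem descentAcross_none_left (y : Option ℕ) : descentAcross none y = 0 := by
  cases y <;> rfl

@[simp]
theorem descentAcross_none_right (x : Option ℕ) : descentAcross x none = 0 := by
  cases x <;> rfl

theorem descentAcross_exchange (p q x y : Option ℕ) :
    descentAcross p x + descentAcross q y ≤ descentAcross p y + descentAcross q x + 1 := by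
  rcases p with _ | p <;> rcases q with _ | q <;> rcases x with _ | x <;> rcases y with _ | y <;>
    simp only [descentAcross] <;> (try split_ifs) <;> omega

theorem descentAcross_rotate {x x' : ℕ} (a c : Option ℕ) (y y' : ℕ) (hx : x ≤ x') :
    descentAcross a (some x) + descentAcross (some x') (some y) + descentAcross (some y') c
      ≤ descentAcross a (some y) + descentAcross (some y') (some x) + descentAcross (some x') c
        + 2 := by
  rcases a with _ | a <;> rcases c with _ | c <;> simp only [descentAcross] <;> split_ifs <;> omega

@[simp]
theorem revCount_nil : revCount [] = 0 := rfl

theorem revCount_cons (a : ℕ) (l : List ℕ) :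
    revCount (a :: l) = descentAcross (some a) l.head? + revCount l := by
  cases l with
  | nil => rfl
  | cons b l =>
    simp only [revCount, List.tail_cons, List.zip_cons_cons, List.countP_cons, List.head?_cons,
      descentAcross, decide_eq_true_eq]
    split_ifs <;> omega

theorem revCount_append (u v : List ℕ) :
    revCount (u ++ v) = revCount u + revCount v + descentAcross u.getLast? v.head? := by
  induction u with
  | nil => simp
  | cons a u ih =>
    rw [List.cons_append, revCount_cons, ih, revCount_cons]
    cases u with
    | nil => simp [Nat.add_comm]
    | cons b u =>
      simp only [List.cons_append, List.head?_cons, List.getLast?_cons_cons]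
      omega

theorem revCount_range' (s n : ℕ) : revCount (List.range' s n) = 0 := by
  induction n generalizing s with
  | zero => rfl
  | succ n ih =>
    rw [List.range'_succ, revCount_cons, ih]
    cases n <;> simp [descentAcross, List.head?_range']

theorem IsRun.eq_range' {a : ℕ} {l : List ℕ} (h : IsRun (a :: l)) :
    a :: l = List.range' a (l.length + 1) := by
  induction l generalizing a with
  | nil => rfl
  | cons b l ih =>
    obtain ⟨rfl, hl⟩ := List.isChain_cons_cons.mp h
    rw [List.length_cons, List.range'_succ, ← ih hl]

theorem IsRun.head_le_getLast {a b : ℕ} {l : List ℕ} (h : IsRun (a :: l))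
    (hb : (a :: l).getLast? = some b) : a ≤ b := by
  rw [h.eq_range', List.getLast?_range'] at hb
  simp at hb
  omega

theorem revCount_le_revCount_swap_add_two (A B C : List ℕ) {X Y : List ℕ} {x x' : ℕ}
    (hx : X.head? = some x) (hx' : X.getLast? = some x') (hxx' : x ≤ x') (hY : Y ≠ []) :
    revCount (A ++ X ++ B ++ Y ++ C) ≤ revCount (A ++ Y ++ B ++ X ++ C) + 2 := by
  obtain ⟨y, hy⟩ := Option.ne_none_iff_exists'.mp (List.head?_eq_none_iff.not.mpr hY)
  obtain ⟨y', hy'⟩ := Option.ne_none_iff_exists'.mp (List.getLast?_eq_none_iff.not.mpr hY)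
  simp only [revCount_append, List.getLast?_append, hx, hx', hy, hy', Option.some_or]
  cases B with
  | nil =>
    simp only [revCount_nil, List.getLast?_nil, List.head?_nil, Option.none_or,
      descentAcross_none_right]
    have := descentAcross_rotate A.getLast? C.head? y y' hxx'
    omega
  | cons b B =>
    obtain ⟨b', hb'⟩ : ∃ b', (b :: B).getLast? = some b' :=
      ⟨_, List.getLast?_eq_getLast_of_ne_nil (List.cons_ne_nil _ _)⟩
    simp only [hb', List.head?_cons, Option.some_or]
    have := descentAcross_exchange A.getLast? (some b') (some x) (some y)
    have := descentAcross_exchange (some x') (some y') (some b) C.head?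
    omega

theorem StripSwap.revCount_le {π π' : List ℕ} (h : StripSwap π π') :
    revCount π ≤ revCount π' + 2 := by
  obtain ⟨A, X, B, Y, C, rfl, rfl, hX, hY, hXrun, -, -, -, -, -⟩ := h
  obtain ⟨x, X, rfl⟩ := List.exists_cons_of_ne_nil hX
  obtain ⟨x', hx'⟩ : ∃ x', (x :: X).getLast? = some x' :=
    ⟨_, List.getLast?_eq_getLast_of_ne_nil hX⟩
  exact revCount_le_revCount_swap_add_two A B C rfl hx' (hXrun.head_le_getLast hx') hY

theorem revCount_le_of_stepsTo {k : ℕ} {π σ : List ℕ} (h : StepsTo StripSwap k π σ) :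
    revCount π ≤ revCount σ + 2 * k := by
  induction k generalizing π with
  | zero => exact (congrArg revCount h).le
  | succ k ih =>
    obtain ⟨π', hswap, hπ'⟩ := h
    have := hswap.revCount_le
    have := ih hπ'
    omega

theorem exists_isRun_prefix (a : ℕ) (T : List ℕ) :
    ∃ U C, T = U ++ C ∧ IsRun (a :: U) ∧ noLink (a :: U).getLast? C.head? := by
  induction T generalizing a with
  | nil => exact ⟨[], [], rfl, List.isChain_singleton a, by simp [noLink]⟩
  | cons b T ih =>
    by_cases hb : b = a + 1
    · obtain ⟨U, C, rfl, hrun, hlink⟩ := ih b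
      refine ⟨b :: U, C, rfl, List.isChain_cons_cons.mpr ⟨hb, hrun⟩, ?_⟩
      rwa [List.getLast?_cons_cons]
    · exact ⟨[], b :: T, rfl, List.isChain_singleton a, by simpa [noLink] using hb⟩

theorem exists_stripSwap_extending_range' {j h : ℕ} {R : List ℕ} (hh : h ≠ j + 1)
    (hmem : j + 1 ∈ R) (hj : j ∉ h :: R) :
    ∃ k R', 0 < k ∧ (h :: R).Perm (List.range' (j + 1) k ++ R') ∧
      StripSwap (List.range' 1 j ++ h :: R) (List.range' 1 (j + k) ++ R') := by
  obtain ⟨Bt, T, rfl⟩ := List.append_of_mem hmem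
  obtain ⟨V, B, rfl, hSrun, hSlink⟩ := exists_isRun_prefix h Bt
  obtain ⟨U, C, rfl, hXrun, hXlink⟩ := exists_isRun_prefix (j + 1) T
  -- swap the strip `h :: V` at the front with the strip `(j + 1) :: U`
  have hne : ∀ p ∈ (h :: V ++ B).getLast?, p ≠ j := by
    rintro p hp rfl
    have := List.mem_of_getLast? hp
    simp only [List.cons_append, List.mem_cons, List.mem_append] at this hj
    tauto
  refine ⟨U.length + 1, B ++ h :: V ++ C, by omega, ?_,
    List.range' 1 j, h :: V, B, (j + 1) :: U, C, by simp, ?_, List.cons_ne_nil _ _,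
    List.cons_ne_nil _ _, hSrun, hXrun, ?_, ?_, ?_, hXlink⟩
  · rw [← hXrun.eq_range']
    simp only [List.perm_iff_count, List.count_cons, List.count_append]
    omega
  · rw [← List.range'_append, Nat.one_mul, Nat.add_comm 1 j, ← hXrun.eq_range']
    simp
  · rw [List.getLast?_range']
    split_ifs
    · simp [noLink]
    · simp only [noLink, List.head?_cons, Option.mem_def, Option.some.injEq]
      rintro _ rfl _ rfl
      omega
  · cases B with
    | nil =>
      intro p hp q hq
      simp only [List.nil_append, List.cons_append, List.head?_cons, Option.mem_def,
        Option.some.injEq] at hq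
      exact fun hpj => hne p (by simpa using hp) (by omega)
    | cons b B => simpa using hSlink
  · intro p hp q hq
    simp only [List.head?_cons, Option.mem_def, Option.some.injEq] at hq
    rw [List.append_assoc, List.getLast?_append_of_ne_nil _ (by simp)] at hp
    exact fun hpj => hne p hp (by omega)

theorem exists_stepsTo_range'_of_perm (j : ℕ) (R : List ℕ)
    (hR : R.Perm (List.range' (j + 1) R.length)) :
    ∃ m, StepsTo StripSwap m (List.range' 1 j ++ R) (List.range' 1 (j + R.length)) := by
  induction hl : R.length using Nat.strong_induction_on generalizing j R with
  | _ len ih =>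
  subst hl
  cases R with
  | nil => exact ⟨0, by simp [StepsTo]⟩
  | cons h R =>
    by_cases hh : h = j + 1
    · subst hh
      rw [List.length_cons, List.range'_succ] at hR
      have hprefix : List.range' 1 j ++ (j + 1) :: R = List.range' 1 (j + 1) ++ R := by
        simp [List.range'_1_concat, Nat.add_comm]
      rw [hprefix, List.length_cons, ← Nat.add_assoc, Nat.add_right_comm]
      exact ih R.length (by simp) (j + 1) R (List.perm_cons _ |>.mp hR) rfl
    · have hmem : j + 1 ∈ R := by
        have : j + 1 ∈ h :: R := hR.mem_iff.mpr (by simp)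
        simpa [Ne.symm hh] using this
      have hj : j ∉ h :: R := fun hj => by simpa using hR.subset hj
      obtain ⟨k, R', hk, hperm, hswap⟩ := exists_stripSwap_extending_range' hh hmem hj
      have hlen : (h :: R).length = k + R'.length := by simpa using hperm.length_eq
      have hR' : R'.Perm (List.range' (j + k + 1) R'.length) := by
        rw [hlen, ← List.range'_append] at hR
        refine (List.perm_append_left_iff _).mp (hperm.symm.trans hR) |>.trans ?_
        rw [Nat.one_mul, Nat.add_right_comm]
      obtain ⟨m, hm⟩ := ih R'.length (by omega) (j + k) R' hR' rfl
      exact ⟨m + 1, _, hswap, by rwa [hlen, ← Nat.add_assoc]⟩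

theorem exists_stepsTo_idPerm {n : ℕ} {π : List ℕ} (h : π.Perm (idPerm n)) :
    ∃ m, StepsTo StripSwap m π (idPerm n) := by
  have hlen : π.length = n := by simpa [idPerm] using h.length_eq
  simpa [idPerm, hlen] using exists_stepsTo_range'_of_perm 0 π (by simpa [hlen, idPerm] using h)

/-- `SSD(π) ≥ ⌈rev(π)/2⌉`. -/
theorem SSD_ge_rev_bound (n : ℕ) (π : List ℕ) (hperm : π.Perm (idPerm n)) :
    SSD n π ≥ (revCount π + 1) / 2 := by
  obtain ⟨m, hm⟩ := exists_stepsTo_idPerm hperm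
  have hSSD : SSD n π ∈ {k | StepsTo StripSwap k π (idPerm n)} := Nat.sInf_mem ⟨m, hm⟩
  have hrev := revCount_le_of_stepsTo hSSD
  rw [idPerm, revCount_range'] at hrev
  omega
end
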